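/- Let φ, ψ be Hausdorff functions with ψ(2ε) ≤ φ(ε) for all ε > 0. Then there exists a compact product K = ∏_{k≥1}{1,…,n_k} ⊂ E, with equilibrium state μ, such that 1 ≤ limsup_{k→∞} (1/(v_k φ(2^{-(k+1)}))) ≤ 2 and 1 ≤ liminf_{k→∞} (1/(v_k ψ(2^{-k}))) ≤ 2, where v_k = n_1⋯n_k. -/

import Mathlib

/-!
Put `a k = 1/φ(2^{-k-1})` and `b k = 1/ψ(2^{-k})`: then `a ≤ b`, `b` is nondecreasing and
`a → ∞`, and the two quantities are `a k / v k` and `b k / v k`. So it suffices to find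
`v k = n 0 ⋯ n (k-1)` with `v k ≤ a k` infinitely often, `a k ≤ 2 v k` eventually,
`v k ≤ b k` eventually and `b k ≤ 2 v k` infinitely often.

Build `v` greedily: `v (k+1)` is the largest multiple of `v k` not exceeding a target `t`
(or `v k` itself if `t < v k`), so that `t/2 ≤ v (k+1) ≤ max (v k) t`. The target is
`b (k+1)` right after a step with `v k ≤ a k`, and `a (k+1)` otherwise. While `v` stays
above `a` it cannot grow, so as `a → ∞` it drops to `a` infinitely often, and each time the
next step brings it within a factor `2` of `b`.
-/

open scoped Classical ENNReal
open Filter Topology MeasureTheory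

/-- The minimal index (counting from 1) at which two elements of the compact product
`K = ∏_k {1,…,n k}` differ. -/
noncomputable def chiK {n : ℕ → ℕ} (x y : ∀ k, Fin (n k)) : ℕ := sInf {k | x k ≠ y k} + 1

/-- The ultrametric `δ(x,y) = 2^{-χ(x,y)}` on the compact product. -/
noncomputable def deltaK {n : ℕ → ℕ} (x y : ∀ k, Fin (n k)) : ℝ :=
  if x = y then 0 else (2 : ℝ) ^ (-(chiK x y : ℤ))

/-- The open `δ`-ball of center `x` and radius `ε`. -/
def BallK {n : ℕ → ℕ} (x : ∀ k, Fin (n k)) (ε : ℝ) : Set (∀ k, Fin (n k)) :=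
  {y | deltaK x y < ε}

/-- The equilibrium state: the product of the uniform probability measures, characterized
by its values on cylinders. -/
def IsEquilibrium {n : ℕ → ℕ} (μ : Measure (∀ k, Fin (n k))) : Prop :=
  ∀ (k : ℕ) (s : ∀ j, Fin (n j)),
    μ {y | ∀ j < k, y j = s j} = ∏ j ∈ Finset.range k, ((n j : ℝ≥0∞))⁻¹

/-- Hausdorff functions: continuous nondecreasing, vanishing exactly at `0`. -/
def IsHausdorffFn (φ : ℝ → ℝ) : Prop :=
  ContinuousOn φ (Set.Ici 0) ∧ MonotoneOn φ (Set.Ici 0) ∧ φ 0 = 0 ∧ ∀ ε > 0, 0 < φ ε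

/-- The upper `φ`-density of `μ` at `x`. -/
noncomputable def upperDensK {n : ℕ → ℕ} (μ : Measure (∀ k, Fin (n k))) (φ : ℝ → ℝ)
    (x : ∀ k, Fin (n k)) : ℝ≥0∞ :=
  Filter.limsup (fun ε : ℝ => μ (BallK x ε) / ENNReal.ofReal (φ ε)) (𝓝[>] 0)

/-- The lower `φ`-density of `μ` at `x`. -/
noncomputable def lowerDensK {n : ℕ → ℕ} (μ : Measure (∀ k, Fin (n k))) (φ : ℝ → ℝ)
    (x : ∀ k, Fin (n k)) : ℝ≥0∞ :=
  Filter.liminf (fun ε : ℝ => μ (BallK x ε) / ENNReal.ofReal (φ ε)) (𝓝[>] 0)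

/-- The `φ`-Hausdorff measure on the compact product, defined via countable covers by
open balls of radii at most `ε`, letting `ε → 0`. -/
noncomputable def HK {n : ℕ → ℕ} (φ : ℝ → ℝ) (S : Set (∀ k, Fin (n k))) : ℝ≥0∞ :=
  ⨆ (ε : ℝ) (_ : 0 < ε),
    ⨅ (c : ℕ → (∀ k, Fin (n k)) × ℝ)
      (_ : (∀ i, 0 ≤ (c i).2 ∧ (c i).2 ≤ ε) ∧ S ⊆ ⋃ i, BallK (c i).1 (c i).2),
      ∑' i, ENNReal.ofReal (φ (c i).2)

/-- The `φ`-packing premeasure on the compact product, defined via countable packs by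
disjoint open balls centered in the set, of radii at most `ε`, letting `ε → 0`. -/
noncomputable def PK0 {n : ℕ → ℕ} (φ : ℝ → ℝ) (S : Set (∀ k, Fin (n k))) : ℝ≥0∞ :=
  ⨅ (ε : ℝ) (_ : 0 < ε),
    ⨆ (c : ℕ → (∀ k, Fin (n k)) × ℝ)
      (_ : (∀ i, (c i).1 ∈ S ∧ 0 ≤ (c i).2 ∧ (c i).2 ≤ ε) ∧
        Pairwise fun i j => Disjoint (BallK (c i).1 (c i).2) (BallK (c j).1 (c j).2)),
      ∑' i, ENNReal.ofReal (φ (c i).2)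

/-- The `φ`-packing measure on the compact product. -/
noncomputable def PK {n : ℕ → ℕ} (φ : ℝ → ℝ) (S : Set (∀ k, Fin (n k))) : ℝ≥0∞ :=
  ⨅ (F : ℕ → Set (∀ k, Fin (n k))) (_ : S ⊆ ⋃ m, F m), ∑' m, PK0 φ (F m)

noncomputable def greedyFactor (v : ℕ) (x : ℝ) : ℕ := max 1 ⌊x / v⌋₊

lemma one_le_greedyFactor (v : ℕ) (x : ℝ) : 1 ≤ greedyFactor v x := le_max_left _ _

lemma le_mul_greedyFactor (v : ℕ) (x : ℝ) : v ≤ v * greedyFactor v x :=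
  Nat.le_mul_of_pos_right v (one_le_greedyFactor v x)

lemma half_le_mul_greedyFactor {v : ℕ} (hv : 0 < v) (x : ℝ) :
    x / 2 ≤ ((v * greedyFactor v x : ℕ) : ℝ) := by
  have hv' : (0 : ℝ) < v := by exact_mod_cast hv
  have hle : (v : ℝ) ≤ (v * greedyFactor v x : ℕ) := by exact_mod_cast le_mul_greedyFactor v x
  have hfloor : x / v - 1 < greedyFactor v x := by
    have := Nat.lt_floor_add_one (x / v)
    have : (⌊x / v⌋₊ : ℝ) ≤ greedyFactor v x := by exact_mod_cast le_max_right 1 ⌊x / v⌋₊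
    linarith
  have hsub : x - v < (v * greedyFactor v x : ℕ) := by
    rw [div_sub_one hv'.ne', div_lt_iff₀ hv'] at hfloor
    push_cast
    linarith
  linarith

lemma mul_greedyFactor_le_max {v : ℕ} (hv : 0 < v) (x : ℝ) :
    ((v * greedyFactor v x : ℕ) : ℝ) ≤ max (v : ℝ) x := by
  have hv' : (0 : ℝ) < v := by exact_mod_cast hv
  have hfactor : (greedyFactor v x : ℝ) ≤ max 1 (x / v) := by
    rcases le_or_gt 0 (x / v) with hx | hx
    · push_cast [greedyFactor]
      exact max_le_max le_rfl (Nat.floor_le hx)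
    · simp [greedyFactor, Nat.floor_eq_zero.2 (hx.trans one_pos)]
  calc ((v * greedyFactor v x : ℕ) : ℝ) = v * greedyFactor v x := by push_cast; rfl
    _ ≤ v * max 1 (x / v) := by gcongr
    _ = max (v : ℝ) x := by rw [mul_max_of_nonneg _ _ hv'.le, mul_one, mul_div_cancel₀ _ hv'.ne']

section Chase

variable (a b : ℕ → ℝ)

noncomputable def chaseTarget (k v : ℕ) : ℝ := if (v : ℝ) ≤ a k then b (k + 1) else a (k + 1)

noncomputable def chaseSeq : ℕ → ℕ
  | 0 => 1
  | k + 1 => chaseSeq k * greedyFactor (chaseSeq k) (chaseTarget a b k (chaseSeq k))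

noncomputable def chaseFactor (k : ℕ) : ℕ :=
  greedyFactor (chaseSeq a b k) (chaseTarget a b k (chaseSeq a b k))

lemma chaseSeq_succ (k : ℕ) : chaseSeq a b (k + 1) = chaseSeq a b k * chaseFactor a b k := rfl

lemma chaseFactor_pos (k : ℕ) : 0 < chaseFactor a b k := one_le_greedyFactor _ _

lemma chaseSeq_pos : ∀ k, 0 < chaseSeq a b k
  | 0 => one_pos
  | k + 1 => Nat.mul_pos (chaseSeq_pos k) (chaseFactor_pos a b k)

lemma prod_chaseFactor (k : ℕ) :
    ∏ j ∈ Finset.range k, (chaseFactor a b j : ℝ) = chaseSeq a b k := by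
  induction k with
  | zero => simp [chaseSeq]
  | succ k ih => rw [Finset.prod_range_succ, ih, chaseSeq_succ]; push_cast; rfl

lemma half_le_chaseSeq_succ (k : ℕ) :
    chaseTarget a b k (chaseSeq a b k) / 2 ≤ chaseSeq a b (k + 1) :=
  half_le_mul_greedyFactor (chaseSeq_pos a b k) _

lemma chaseSeq_succ_le_max (k : ℕ) :
    (chaseSeq a b (k + 1) : ℝ) ≤ max (chaseSeq a b k : ℝ) (chaseTarget a b k (chaseSeq a b k)) :=
  mul_greedyFactor_le_max (chaseSeq_pos a b k) _

variable {a b}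

lemma chaseSeq_le_max_one (hab : ∀ k, a k ≤ b k) (hb : Monotone b) :
    ∀ k, (chaseSeq a b k : ℝ) ≤ max 1 (b k)
  | 0 => by simp [chaseSeq]
  | k + 1 => by
    have htarget : chaseTarget a b k (chaseSeq a b k) ≤ b (k + 1) := by
      unfold chaseTarget; split_ifs <;> simp [hab]
    calc (chaseSeq a b (k + 1) : ℝ)
        ≤ max (chaseSeq a b k : ℝ) (chaseTarget a b k (chaseSeq a b k)) :=
          chaseSeq_succ_le_max a b k
      _ ≤ max (max 1 (b k)) (b (k + 1)) := max_le_max (chaseSeq_le_max_one hab hb k) htarget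
      _ ≤ max 1 (b (k + 1)) := max_le (max_le_max le_rfl (hb k.le_succ)) (le_max_right _ _)

lemma half_a_le_chaseSeq_succ (hab : ∀ k, a k ≤ b k) (k : ℕ) :
    a (k + 1) / 2 ≤ chaseSeq a b (k + 1) := by
  refine le_trans ?_ (half_le_chaseSeq_succ a b k)
  unfold chaseTarget; split_ifs <;> linarith [hab (k + 1)]

lemma half_b_le_chaseSeq_succ_of_le {k : ℕ} (hk : (chaseSeq a b k : ℝ) ≤ a k) :
    b (k + 1) / 2 ≤ chaseSeq a b (k + 1) := by
  simpa [chaseTarget, hk] using half_le_chaseSeq_succ a b k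

lemma frequently_chaseSeq_le (ha : Tendsto a atTop atTop) :
    ∃ᶠ k in atTop, (chaseSeq a b k : ℝ) ≤ a k := by
  rw [Filter.frequently_atTop]
  by_contra! ⟨K, hK⟩
  have hstep : ∀ k ≥ K, chaseSeq a b (k + 1) ≤ chaseSeq a b k := by
    intro k hk
    have h := chaseSeq_succ_le_max a b k
    simp only [chaseTarget, not_le.2 (hK k hk), if_false] at h
    have := hK (k + 1) (by omega)
    exact_mod_cast (le_max_iff.1 h).resolve_right (by linarith)
  have hbounded : ∀ k ≥ K, chaseSeq a b k ≤ chaseSeq a b K := by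
    intro k hk
    induction k, hk using Nat.le_induction with
    | base => rfl
    | succ k hk ih => exact (hstep k hk).trans ih
  obtain ⟨k, hk⟩ := ((ha.eventually_ge_atTop (chaseSeq a b K : ℝ)).and
    (eventually_ge_atTop K)).exists
  have : (chaseSeq a b k : ℝ) ≤ chaseSeq a b K := by exact_mod_cast hbounded k hk.2
  linarith [hK k hk.2]

end Chase

lemma exists_factors_prod_approx {a b : ℕ → ℝ} (hab : ∀ k, a k ≤ b k) (hb : Monotone b)
    (ha : Tendsto a atTop atTop) :
    ∃ n : ℕ → ℕ, (∀ k, 0 < n k) ∧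
      (∃ᶠ k in atTop, ∏ j ∈ Finset.range k, (n j : ℝ) ≤ a k) ∧
      (∀ᶠ k in atTop, a k ≤ 2 * ∏ j ∈ Finset.range k, (n j : ℝ)) ∧
      (∀ᶠ k in atTop, ∏ j ∈ Finset.range k, (n j : ℝ) ≤ b k) ∧
      (∃ᶠ k in atTop, b k ≤ 2 * ∏ j ∈ Finset.range k, (n j : ℝ)) := by
  refine ⟨chaseFactor a b, chaseFactor_pos a b, ?_, ?_, ?_, ?_⟩ <;> simp only [prod_chaseFactor]
  · exact frequently_chaseSeq_le ha
  · filter_upwards [Nat.eventually_pos] with k hk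
    obtain ⟨m, rfl⟩ := Nat.exists_eq_succ_of_ne_zero hk.ne'
    linarith [half_a_le_chaseSeq_succ hab m]
  · filter_upwards [(tendsto_atTop_mono hab ha).eventually_ge_atTop 1] with k hk
    simpa [max_eq_right hk] using chaseSeq_le_max_one hab hb k
  · refine (tendsto_add_atTop_nat 1).frequently
      ((frequently_chaseSeq_le (b := b) ha).mono fun k hk => ?_)
    linarith [half_b_le_chaseSeq_succ_of_le hk]

lemma IsHausdorffFn.pos {φ : ℝ → ℝ} (hφ : IsHausdorffFn φ) {ε : ℝ} (hε : 0 < ε) : 0 < φ ε :=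
  hφ.2.2.2 ε hε

lemma IsHausdorffFn.tendsto_nhdsGT_zero {φ : ℝ → ℝ} (hφ : IsHausdorffFn φ) :
    Tendsto φ (𝓝[>] 0) (𝓝[>] 0) := by
  refine tendsto_nhdsWithin_iff.2 ⟨?_, eventually_nhdsWithin_of_forall fun ε hε => hφ.pos hε⟩
  have := (hφ.1.continuousWithinAt Set.self_mem_Ici).tendsto.mono_left
    (nhdsWithin_mono 0 Set.Ioi_subset_Ici_self)
  rwa [hφ.2.2.1] at this

lemma IsHausdorffFn.tendsto_inv_comp_atTop {φ : ℝ → ℝ} (hφ : IsHausdorffFn φ) {r : ℕ → ℝ}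
    (hr : Tendsto r atTop (𝓝[>] 0)) : Tendsto (fun k => (φ (r k))⁻¹) atTop atTop :=
  (hφ.tendsto_nhdsGT_zero.comp hr).inv_tendsto_nhdsGT_zero

lemma IsHausdorffFn.monotone_inv_comp {φ : ℝ → ℝ} (hφ : IsHausdorffFn φ) {r : ℕ → ℝ}
    (hr : ∀ k, 0 < r k) (hanti : Antitone r) : Monotone fun k => (φ (r k))⁻¹ :=
  fun _ j hij => inv_anti₀ (hφ.pos (hr j)) (hφ.2.1 (hr j).le (hr _).le (hanti hij))

lemma antitone_two_zpow_neg : Antitone fun k : ℕ => (2 : ℝ) ^ (-(k : ℤ)) :=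
  fun _ _ hij => zpow_le_zpow_right₀ one_le_two (by simpa using hij)

lemma two_mul_two_zpow_neg_sub_one (k : ℕ) :
    2 * (2 : ℝ) ^ (-(k : ℤ) - 1) = 2 ^ (-(k : ℤ)) := by
  rw [zpow_sub_one₀ two_ne_zero]; ring

lemma tendsto_two_zpow_neg_sub_one :
    Tendsto (fun k : ℕ => (2 : ℝ) ^ (-(k : ℤ) - 1)) atTop (𝓝[>] 0) := by
  have h : (fun k : ℕ => (2 : ℝ) ^ (-(k : ℤ) - 1)) = fun k => 2⁻¹ ^ (k + 1) := by
    funext k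
    rw [show -(k : ℤ) - 1 = -((k + 1 : ℕ) : ℤ) by push_cast; ring, zpow_neg, zpow_natCast, inv_pow]
  rw [h]
  refine tendsto_nhdsWithin_iff.2 ⟨?_, .of_forall fun k => Set.mem_Ioi.2 (by positivity)⟩
  exact (tendsto_pow_atTop_nhds_zero_of_lt_one (by norm_num) (by norm_num)).comp
    (tendsto_add_atTop_nat 1)

lemma one_le_ofReal_div {u v : ℝ} (hv : 0 < v) (h : v ≤ u) : 1 ≤ ENNReal.ofReal (u / v) :=
  ENNReal.one_le_ofReal.2 ((one_le_div hv).2 h)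

lemma ofReal_div_le_two {u v : ℝ} (hv : 0 < v) (h : u ≤ 2 * v) : ENNReal.ofReal (u / v) ≤ 2 := by
  simpa using ENNReal.ofReal_le_ofReal ((div_le_iff₀ hv).2 h)

theorem stmt14_general (φ ψ : ℝ → ℝ) (hφ : IsHausdorffFn φ) (hψ : IsHausdorffFn ψ)
    (h : ∀ ε : ℝ, 0 < ε → ψ (2 * ε) ≤ φ ε) :
    ∃ n : ℕ → ℕ, (∀ k, 0 < n k) ∧
      (1 ≤ Filter.limsup (fun k : ℕ => ENNReal.ofReal
          (1 / ((∏ j ∈ Finset.range k, (n j : ℝ)) * φ ((2 : ℝ) ^ (-(k : ℤ) - 1))))) atTop) ∧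
      (Filter.limsup (fun k : ℕ => ENNReal.ofReal
          (1 / ((∏ j ∈ Finset.range k, (n j : ℝ)) * φ ((2 : ℝ) ^ (-(k : ℤ) - 1))))) atTop ≤ 2) ∧
      (1 ≤ Filter.liminf (fun k : ℕ => ENNReal.ofReal
          (1 / ((∏ j ∈ Finset.range k, (n j : ℝ)) * ψ ((2 : ℝ) ^ (-(k : ℤ)))))) atTop) ∧
      (Filter.liminf (fun k : ℕ => ENNReal.ofReal
          (1 / ((∏ j ∈ Finset.range k, (n j : ℝ)) * ψ ((2 : ℝ) ^ (-(k : ℤ)))))) atTop ≤ 2) := by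
  have hr : ∀ k : ℕ, (0 : ℝ) < 2 ^ (-(k : ℤ) - 1) := fun k => by positivity
  obtain ⟨n, hn, h₁, h₂, h₃, h₄⟩ := exists_factors_prod_approx
    (a := fun k : ℕ => (φ (2 ^ (-(k : ℤ) - 1)))⁻¹) (b := fun k : ℕ => (ψ (2 ^ (-(k : ℤ))))⁻¹)
    (fun k => inv_anti₀ (hψ.pos (by positivity))
      (by simpa [two_mul_two_zpow_neg_sub_one] using h _ (hr k)))
    (hψ.monotone_inv_comp (fun k => by positivity) antitone_two_zpow_neg)
    (hφ.tendsto_inv_comp_atTop tendsto_two_zpow_neg_sub_one)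
  have hv : ∀ k, 0 < ∏ j ∈ Finset.range k, (n j : ℝ) :=
    fun k => Finset.prod_pos fun j _ => by exact_mod_cast hn j
  refine ⟨n, hn, ?_, ?_, ?_, ?_⟩ <;> simp only [div_mul_eq_div_div_swap, one_div]
  · exact le_limsup_of_frequently_le (h₁.mono fun k => one_le_ofReal_div (hv k))
      (by isBoundedDefault)
  · exact limsup_le_of_le (by isBoundedDefault) (h₂.mono fun k => ofReal_div_le_two (hv k))
  · exact le_liminf_of_le (by isBoundedDefault) (h₃.mono fun k => one_le_ofReal_div (hv k))
  · exact liminf_le_of_frequently_le (h₄.mono fun k => ofReal_div_le_two (hv k))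
      (by isBoundedDefault)

/-- Given Hausdorff functions `φ, ψ` with `ψ(2ε) ≤ φ(ε)` (and `φ(ε) → 0` as `ε → 0`),
there is a compact product `K = ∏_k {1,…,n k}` such that, with `v k = n_1 ⋯ n_k`,
`1 ≤ limsup 1/(v_k φ(2^{-(k+1)})) ≤ 2` and `1 ≤ liminf 1/(v_k ψ(2^{-k})) ≤ 2`. -/
theorem stmt14 (φ ψ : ℝ → ℝ) (hφ : IsHausdorffFn φ) (hψ : IsHausdorffFn ψ)
    (h : ∀ ε : ℝ, 0 < ε → ψ (2 * ε) ≤ φ ε)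
    (hφ0 : Tendsto φ (𝓝[>] (0 : ℝ)) (𝓝 0)) :
    ∃ n : ℕ → ℕ, (∀ k, 0 < n k) ∧
      (1 ≤ Filter.limsup (fun k : ℕ => ENNReal.ofReal
          (1 / ((∏ j ∈ Finset.range k, (n j : ℝ)) * φ ((2 : ℝ) ^ (-(k : ℤ) - 1))))) atTop) ∧
      (Filter.limsup (fun k : ℕ => ENNReal.ofReal
          (1 / ((∏ j ∈ Finset.range k, (n j : ℝ)) * φ ((2 : ℝ) ^ (-(k : ℤ) - 1))))) atTop ≤ 2) ∧
      (1 ≤ Filter.liminf (fun k : ℕ => ENNReal.ofReal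
          (1 / ((∏ j ∈ Finset.range k, (n j : ℝ)) * ψ ((2 : ℝ) ^ (-(k : ℤ)))))) atTop) ∧
      (Filter.liminf (fun k : ℕ => ENNReal.ofReal
          (1 / ((∏ j ∈ Finset.range k, (n j : ℝ)) * ψ ((2 : ℝ) ^ (-(k : ℤ)))))) atTop ≤ 2) :=
  stmt14_general φ ψ hφ hψ h
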